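/- For every real α > 0 and every natural number n, the ratio of the admissibility constant to the squared norm of the Daubechies–Paul mother wavelet is independent of n and equals the critical density bound of Theorem 2.1: 2π · (∫_0^∞ ξ^{-1} (ξ^{α/2} e^{-ξ} L_n^α(2ξ))² dξ) / (∫_0^∞ (ξ^{α/2} e^{-ξ} L_n^α(2ξ))² dξ) = 4π/α; that is, C_{ψ_n^α}/‖ψ_n^α‖² = 4π/α. -/

import Mathlib

open Real MeasureTheory

/-- The generalized Laguerre function given by the Rodrigues formula
`L_n^α(t) = (t^{-α} e^t / n!) · (d/dt)^n (e^{-t} t^{α+n})`. -/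
noncomputable def lag (α : ℝ) (n : ℕ) (t : ℝ) : ℝ :=
  t ^ (-α) * Real.exp t / n.factorial *
    iteratedDeriv n (fun s : ℝ => Real.exp (-s) * s ^ (α + n)) t

/-- The Fourier-side profile of the Daubechies–Paul mother wavelet:
`(Fψ_n^α)(ξ) = ξ^{α/2} e^{-ξ} L_n^α(2ξ)` for `ξ > 0`. -/
noncomputable def dpProfile (α : ℝ) (n : ℕ) (ξ : ℝ) : ℝ :=
  ξ ^ (α / 2) * Real.exp (-ξ) * lag α n (2 * ξ)

/-!
On `(0, ∞)` the Rodrigues formula and Leibniz's rule make `L_n^α` a polynomial `p` of degree `n`.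
After `t = 2ξ` the two integrals are `2^(-α) M_α(p²)` and `2^(-α-1) M_(α+1)(p²)`, where
`M_s(q) = ∫₀^∞ t^(s-1) e^(-t) q(t) dt = ∑ₖ qₖ Γ(s + k)`. Integration by parts gives
`M_(α+1)(q) = α M_α(q) + M_(α+1)(q')`, and `M_(α+1)((p²)') = 2 M_(α+1)(p p') = 0` because `p` is
orthogonal for the weight `t^α e^(-t)` to polynomials of degree `< n`: `M_(α+1+i)(p)` is a
multiple of `∑ⱼ (-1)^j C(n, j) Q(j)` with `Q` of degree `i`, an `n`-th finite difference, which
vanishes for `i < n`. Hence `M_(α+1)(p²) = α M_α(p²) > 0`, and the ratio is `2π · 2 / α`.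
-/

open Polynomial Finset Nat

theorem ne_neg_natCast_of_pos {s : ℝ} (hs : 0 < s) (m : ℕ) : s ≠ -m :=
  ((neg_nonpos.2 m.cast_nonneg).trans_lt hs).ne'

theorem Real.Gamma_add_nat_eq_ascPochhammer_mul {s : ℝ} (hs : ∀ m : ℕ, s ≠ -m) (n : ℕ) :
    Gamma (s + n) = (ascPochhammer ℝ n).eval s * Gamma s := by
  induction n with
  | zero => simp
  | succ n ih =>
    have hsn : s + n ≠ 0 := fun h => hs n (by linarith)
    rw [Nat.cast_succ, ← add_assoc, Gamma_add_one hsn, ih, ascPochhammer_succ_eval]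
    ring

theorem Polynomial.alternating_sum_choose_mul_eval_eq_zero {R : Type*} [CommRing R] {Q : R[X]}
    {n : ℕ} (hQ : Q.natDegree < n) :
    ∑ k ∈ range (n + 1), (-1) ^ k * n.choose k * Q.eval (k : R) = 0 := by
  have h := congrFun (fwdDiff_iter_eq_zero_of_degree_lt hQ) 0
  rw [fwdDiff_iter_eq_sum_shift] at h
  have hsign : ∀ k ∈ range (n + 1), (-1 : R) ^ k = (-1) ^ n * (-1) ^ (n - k) := fun k hk => by
    obtain ⟨m, rfl⟩ := Nat.exists_eq_add_of_le (Nat.lt_succ_iff.mp (mem_range.mp hk))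
    rw [Nat.add_sub_cancel_left, pow_add, mul_assoc, ← pow_add, Even.neg_one_pow ⟨m, rfl⟩,
      mul_one]
  calc ∑ k ∈ range (n + 1), (-1) ^ k * n.choose k * Q.eval (k : R)
      = (-1) ^ n *
          ∑ k ∈ range (n + 1), ((-1 : ℤ) ^ (n - k) * n.choose k) • Q.eval (0 + k • 1) := by
        rw [mul_sum]
        refine sum_congr rfl fun k hk => ?_
        rw [hsign k hk, zsmul_eq_mul, zero_add, nsmul_one]
        push_cast
        ring
    _ = 0 := by rw [h, Pi.zero_apply, mul_zero]

theorem iteratedDeriv_exp_neg_mul_rpow {t : ℝ} (ht : 0 < t) (β : ℝ) (n : ℕ) :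
    iteratedDeriv n (fun s => exp (-s) * s ^ β) t = exp (-t) * ∑ i ∈ range (n + 1),
      (-1) ^ i * n.choose i * (descPochhammer ℝ (n - i)).eval β * t ^ (β - (n - i : ℕ)) := by
  have hexp : ∀ i, iteratedDeriv i (fun s => exp (-s)) t = (-1) ^ i * exp (-t) := fun i => by
    simpa using congrFun (iteratedDeriv_exp_const_mul i (-1)) t
  rw [iteratedDeriv_fun_mul (f := fun s => exp (-s)) (by fun_prop)
    (contDiffAt_rpow_const (Or.inl ht.ne')), mul_sum]
  refine sum_congr rfl fun i _ => ?_
  rw [hexp, iteratedDeriv_eq_iterate, iter_deriv_rpow_const]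
  ring

/-- `gammaMoment s q = ∫₀^∞ t^(s-1) e^(-t) q(t) dt` for `0 < s`
(`integral_rpow_mul_exp_neg_mul_eval`), defined algebraically by `X^k ↦ Γ(s + k)`. -/
noncomputable def gammaMoment (s : ℝ) : ℝ[X] →ₗ[ℝ] ℝ :=
  lsum fun k => Gamma (s + k) • LinearMap.id

theorem gammaMoment_monomial (s a : ℝ) (k : ℕ) :
    gammaMoment s (monomial k a) = a * Gamma (s + k) := by
  simp [gammaMoment, mul_comm]

theorem gammaMoment_C_mul_X_pow (s a : ℝ) (k : ℕ) :
    gammaMoment s (C a * X ^ k) = a * Gamma (s + k) := by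
  rw [C_mul_X_pow_eq_monomial, gammaMoment_monomial]

theorem gammaMoment_eq_sum_range (s : ℝ) (q : ℝ[X]) :
    gammaMoment s q = ∑ k ∈ range (q.natDegree + 1), q.coeff k * Gamma (s + k) := by
  conv_lhs => rw [q.as_sum_range_C_mul_X_pow]
  simp only [map_sum, gammaMoment_C_mul_X_pow]

theorem gammaMoment_mul_X_pow (s : ℝ) (q : ℝ[X]) (i : ℕ) :
    gammaMoment s (q * X ^ i) = gammaMoment (s + i) q := by
  induction q using Polynomial.induction_on' with
  | add p q hp hq => rw [add_mul, map_add, map_add, hp, hq]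
  | monomial k a =>
    rw [← C_mul_X_pow_eq_monomial, mul_assoc, ← pow_add, gammaMoment_C_mul_X_pow,
      gammaMoment_C_mul_X_pow]
    push_cast
    ring_nf

theorem gammaMoment_add_one {s : ℝ} (hs : ∀ m : ℕ, s ≠ -m) (q : ℝ[X]) :
    gammaMoment (s + 1) q = s * gammaMoment s q + gammaMoment (s + 1) (derivative q) := by
  induction q using Polynomial.induction_on' with
  | add p q hp hq => rw [map_add, map_add, derivative_add, map_add, hp, hq]; ring
  | monomial k a =>
    have hsk : s + k ≠ 0 := fun h => hs k (by linarith)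
    rw [derivative_monomial, gammaMoment_monomial, gammaMoment_monomial, gammaMoment_monomial,
      add_right_comm, Gamma_add_one hsk]
    rcases k with _ | k
    · simp only [CharP.cast_eq_zero, add_zero, Nat.zero_sub]
      ring
    · push_cast
      rw [show s + 1 + (k : ℝ) = s + (k + 1) by ring]
      ring

theorem integrableOn_rpow_mul_exp_neg_mul {a b : ℝ} (ha : 0 < a) (hb : 0 < b) :
    IntegrableOn (fun ξ => ξ ^ (a - 1) * exp (-(b * ξ))) (Set.Ioi 0) :=
  Integrable.of_integral_ne_zero <| by
    rw [integral_rpow_mul_exp_neg_mul_Ioi ha hb]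
    exact (mul_pos (by positivity) (Gamma_pos_of_pos ha)).ne'

theorem rpow_mul_exp_neg_mul_eval_eq_sum {s b ξ : ℝ} (hξ : 0 < ξ) (q : ℝ[X]) :
    ξ ^ (s - 1) * exp (-(b * ξ)) * q.eval (b * ξ) = ∑ k ∈ range (q.natDegree + 1),
      q.coeff k * b ^ k * (ξ ^ (s + k - 1) * exp (-(b * ξ))) := by
  rw [eval_eq_sum_range, mul_sum]
  refine sum_congr rfl fun k _ => ?_
  rw [show s + k - 1 = (s - 1) + k by ring, rpow_add hξ, rpow_natCast]
  ring

theorem integrableOn_rpow_mul_exp_neg_mul_eval {s b : ℝ} (hs : 0 < s) (hb : 0 < b) (q : ℝ[X]) :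
    IntegrableOn (fun ξ => ξ ^ (s - 1) * exp (-(b * ξ)) * q.eval (b * ξ)) (Set.Ioi 0) :=
  IntegrableOn.congr_fun (integrable_finsetSum _ fun k _ =>
      (integrableOn_rpow_mul_exp_neg_mul (by positivity) hb).const_mul (q.coeff k * b ^ k))
    (fun ξ hξ => (rpow_mul_exp_neg_mul_eval_eq_sum hξ q).symm) measurableSet_Ioi

theorem integral_rpow_mul_exp_neg_mul_eval {s b : ℝ} (hs : 0 < s) (hb : 0 < b) (q : ℝ[X]) :
    ∫ ξ in Set.Ioi 0, ξ ^ (s - 1) * exp (-(b * ξ)) * q.eval (b * ξ) =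
      (1 / b) ^ s * gammaMoment s q := by
  rw [setIntegral_congr_fun measurableSet_Ioi fun ξ hξ => rpow_mul_exp_neg_mul_eval_eq_sum hξ q,
    integral_finsetSum _ fun k _ =>
      (integrableOn_rpow_mul_exp_neg_mul (by positivity) hb).const_mul _,
    gammaMoment_eq_sum_range, mul_sum]
  refine sum_congr rfl fun k _ => ?_
  rw [integral_const_mul, integral_rpow_mul_exp_neg_mul_Ioi (by positivity) hb,
    rpow_add (by positivity), rpow_natCast, div_pow, one_pow]
  field_simp

theorem gammaMoment_sq_pos {s : ℝ} (hs : 0 < s) {q : ℝ[X]} (hq : q ≠ 0) :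
    0 < gammaMoment s (q ^ 2) := by
  set f : ℝ → ℝ := fun ξ => ξ ^ (s - 1) * exp (-ξ) * (q ^ 2).eval ξ
  have hf : ∫ ξ in Set.Ioi 0, f ξ = gammaMoment s (q ^ 2) := by
    simpa only [one_mul, div_one, one_rpow] using
      integral_rpow_mul_exp_neg_mul_eval hs one_pos (q ^ 2)
  have hint : IntegrableOn f (Set.Ioi 0) := by
    simpa only [one_mul] using integrableOn_rpow_mul_exp_neg_mul_eval hs one_pos (q ^ 2)
  have hnonneg : 0 ≤ᵐ[volume.restrict (Set.Ioi 0)] f := by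
    filter_upwards [ae_restrict_mem measurableSet_Ioi] with ξ (hξ : 0 < ξ)
    simp only [f, Pi.zero_apply, eval_pow]
    positivity
  set Z : Set ℝ := ↑q.roots.toFinset
  have hsub : Set.Ioi 0 \ Z ⊆ Function.support f ∩ Set.Ioi 0 := by
    rintro ξ ⟨hξ : 0 < ξ, hZ⟩
    have hroot : q.eval ξ ≠ 0 := fun h0 => hZ (by simpa [Z, mem_roots hq] using h0)
    exact ⟨by simp only [f, Function.mem_support, eval_pow]; positivity, hξ⟩
  rw [← hf, integral_pos_iff_support_of_nonneg_ae hnonneg hint,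
    Measure.restrict_apply' measurableSet_Ioi]
  calc (0 : ENNReal) < volume (Set.Ioi (0 : ℝ) \ Z) := by
        rw [measure_sdiff_null (Z.toFinite.measure_zero _), volume_Ioi]
        exact ENNReal.zero_lt_top
    _ ≤ _ := measure_mono hsub

-- `(-1)^j binom(n + α, n - j) / j!`, the coefficient of `t^j` in `L_n^α(t)`.
noncomputable def lagCoeff (α : ℝ) (n j : ℕ) : ℝ :=
  (-1) ^ j * n.choose j * (descPochhammer ℝ (n - j)).eval (α + n) / n !

noncomputable def lagPoly (α : ℝ) (n : ℕ) : ℝ[X] :=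
  ∑ j ∈ range (n + 1), C (lagCoeff α n j) * X ^ j

theorem lag_eq_eval_lagPoly (α : ℝ) (n : ℕ) {t : ℝ} (ht : 0 < t) :
    lag α n t = (lagPoly α n).eval t := by
  simp only [lag, iteratedDeriv_exp_neg_mul_rpow ht, lagPoly, eval_finsetSum, eval_mul, eval_C,
    eval_pow, eval_X, mul_sum]
  refine sum_congr rfl fun j hj => ?_
  have hpow : t ^ (-α) * t ^ (α + n - (n - j : ℕ)) = t ^ j := by
    rw [← rpow_add ht, Nat.cast_sub (by simpa [Nat.lt_succ_iff] using hj), ← rpow_natCast]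
    ring_nf
  have hexp : exp t * exp (-t) = 1 := by rw [← exp_add, add_neg_cancel, exp_zero]
  rw [lagCoeff, ← hpow]
  linear_combination (t ^ (-α) * ((-1) ^ j * n.choose j *
    (descPochhammer ℝ (n - j)).eval (α + n) * t ^ (α + n - (n - j : ℕ))) / n !) * hexp

theorem degree_lagPoly_le (α : ℝ) (n : ℕ) : (lagPoly α n).degree ≤ n :=
  (degree_sum_le _ _).trans <| Finset.sup_le fun j hj =>
    (degree_C_mul_X_pow_le j _).trans (by exact_mod_cast Nat.lt_succ_iff.mp (mem_range.mp hj))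

theorem coeff_lagPoly_self (α : ℝ) (n : ℕ) : (lagPoly α n).coeff n = (-1) ^ n / n ! := by
  rw [lagPoly, finsetSum_coeff, sum_eq_single n (fun j _ hj => by simp [Ne.symm hj])
    (by simp), coeff_C_mul_X_pow, if_pos rfl]
  simp [lagCoeff]

theorem lagPoly_ne_zero (α : ℝ) (n : ℕ) : lagPoly α n ≠ 0 := fun h => by
  have := coeff_lagPoly_self α n
  rw [h, coeff_zero] at this
  exact div_ne_zero (pow_ne_zero n (by norm_num)) (by positivity) this.symm

theorem gammaMoment_lagPoly_eq_zero {α : ℝ} (hα : -1 < α) {n i : ℕ} (hi : i < n) :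
    gammaMoment (α + 1 + i) (lagPoly α n) = 0 := by
  set Q : ℝ[X] := (ascPochhammer ℝ i).comp (X + C (α + 1))
  have hQ : Q.natDegree < n := by
    rwa [natDegree_comp, ascPochhammer_natDegree, natDegree_X_add_C, mul_one]
  have hterm : ∀ j ∈ range (n + 1), lagCoeff α n j * Gamma (α + 1 + i + j) =
      Gamma (α + n + 1) / n ! * ((-1) ^ j * n.choose j * Q.eval (j : ℝ)) := fun j hj => by
    have hjn : j ≤ n := Nat.lt_succ_iff.mp (mem_range.mp hj)
    have hpos := ne_neg_natCast_of_pos (s := α + 1 + j) (by linarith [j.cast_nonneg (α := ℝ)])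
    have hshift := Gamma_add_nat_eq_ascPochhammer_mul hpos i
    have htop := Gamma_add_nat_eq_ascPochhammer_mul hpos (n - j)
    rw [Nat.cast_sub hjn, show α + 1 + j + (n - j : ℝ) = α + n + 1 by ring] at htop
    have hdesc : (descPochhammer ℝ (n - j)).eval (α + n) =
        (ascPochhammer ℝ (n - j)).eval (α + 1 + j) := by
      rw [descPochhammer_eval_eq_ascPochhammer, Nat.cast_sub hjn]
      ring_nf
    rw [lagCoeff, hdesc, htop, show α + 1 + i + j = α + 1 + j + i by ring, hshift]
    simp only [Q, eval_comp, eval_add, eval_X, eval_C]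
    rw [show (j : ℝ) + (α + 1) = α + 1 + j by ring]
    ring
  rw [lagPoly, map_sum]
  simp only [gammaMoment_C_mul_X_pow]
  rw [sum_congr rfl hterm, ← mul_sum, alternating_sum_choose_mul_eval_eq_zero hQ, mul_zero]

theorem gammaMoment_lagPoly_mul_eq_zero {α : ℝ} (hα : -1 < α) {n : ℕ} {r : ℝ[X]}
    (hr : r.degree < n) : gammaMoment (α + 1) (lagPoly α n * r) = 0 := by
  have : degreeLT ℝ n ≤
      LinearMap.ker ((gammaMoment (α + 1)).comp (LinearMap.mulLeft ℝ (lagPoly α n))) := by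
    rw [degreeLT_eq_span_X_pow, Submodule.span_le]
    intro p hp
    simp only [coe_image, coe_range, Set.mem_image, Set.mem_Iio] at hp
    obtain ⟨i, hi, rfl⟩ := hp
    simp [gammaMoment_mul_X_pow, gammaMoment_lagPoly_eq_zero hα hi]
  exact this (mem_degreeLT.2 hr)

theorem gammaMoment_add_one_lagPoly_sq {α : ℝ} (hα : 0 < α) (n : ℕ) :
    gammaMoment (α + 1) (lagPoly α n ^ 2) = α * gammaMoment α (lagPoly α n ^ 2) := by
  have hdeg : (C 2 * derivative (lagPoly α n)).degree < (n : WithBot ℕ) := by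
    rw [degree_C_mul two_ne_zero]
    exact (degree_derivative_lt (lagPoly_ne_zero α n)).trans_le (degree_lagPoly_le α n)
  rw [gammaMoment_add_one (ne_neg_natCast_of_pos hα), derivative_sq, mul_comm (C 2), mul_assoc,
    gammaMoment_lagPoly_mul_eq_zero (by linarith) hdeg, add_zero]

theorem dpProfile_sq (α : ℝ) (n : ℕ) {ξ : ℝ} (hξ : 0 < ξ) :
    dpProfile α n ξ ^ 2 =
      ξ ^ (α + 1 - 1) * exp (-(2 * ξ)) * (lagPoly α n ^ 2).eval (2 * ξ) := by
  rw [dpProfile, lag_eq_eval_lagPoly α n (by positivity), eval_pow, add_sub_cancel_right,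
    mul_pow, mul_pow, ← rpow_natCast, ← rpow_mul hξ.le, ← exp_nat_mul]
  ring_nf

theorem inv_mul_dpProfile_sq (α : ℝ) (n : ℕ) {ξ : ℝ} (hξ : 0 < ξ) :
    ξ⁻¹ * dpProfile α n ξ ^ 2 =
      ξ ^ (α - 1) * exp (-(2 * ξ)) * (lagPoly α n ^ 2).eval (2 * ξ) := by
  rw [dpProfile_sq α n hξ, add_sub_cancel_right, rpow_sub_one hξ.ne']
  ring

theorem integral_dpProfile_sq {α : ℝ} (hα : -1 < α) (n : ℕ) :
    ∫ ξ in Set.Ioi 0, dpProfile α n ξ ^ 2 =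
      (1 / 2) ^ (α + 1) * gammaMoment (α + 1) (lagPoly α n ^ 2) := by
  rw [setIntegral_congr_fun measurableSet_Ioi fun ξ hξ => dpProfile_sq α n hξ,
    integral_rpow_mul_exp_neg_mul_eval (by linarith) two_pos]

theorem integral_inv_mul_dpProfile_sq {α : ℝ} (hα : 0 < α) (n : ℕ) :
    ∫ ξ in Set.Ioi 0, ξ⁻¹ * dpProfile α n ξ ^ 2 =
      (1 / 2) ^ α * gammaMoment α (lagPoly α n ^ 2) := by
  rw [setIntegral_congr_fun measurableSet_Ioi fun ξ hξ => inv_mul_dpProfile_sq α n hξ,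
    integral_rpow_mul_exp_neg_mul_eval hα two_pos]

/-- The ratio `C_{ψ_n^α} / ‖ψ_n^α‖²` is independent of `n` and equals the critical
density bound `4π/α`. -/
theorem dp_critical_density (α : ℝ) (hα : 0 < α) (n : ℕ) :
    2 * π * (∫ ξ in Set.Ioi (0 : ℝ), ξ⁻¹ * dpProfile α n ξ ^ 2) /
        (∫ ξ in Set.Ioi (0 : ℝ), dpProfile α n ξ ^ 2) = 4 * π / α := by
  have hM := gammaMoment_sq_pos hα (lagPoly_ne_zero α n)
  rw [integral_inv_mul_dpProfile_sq hα, integral_dpProfile_sq (by linarith),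
    gammaMoment_add_one_lagPoly_sq hα, rpow_add_one (by norm_num)]
  field_simp
  ring
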